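/- Let ⬜ be an idempotent monadic modality on types with unit η, and suppose ⬜ preserves identity types in the sense that ⬜(x = y) ≃ (η x = η y) for x, y : A (left exactness at identity types). Then for any type A and any dull point u : ⬜A, the 'reduced type over u' defined as A_u := Σ (y : A), (u = η y) satisfies: ⬜(A_u) is contractible, i.e. A_u is ⬜-connected. Moreover A ≃ Σ (u : ⬜A), A_u. -/
import Mathlib


universe u

/-- A left exact idempotent monadic modality on types: a functorial operation `box` with
units `η`, idempotent, commuting with Σ-types over modal bases, and identifying
`⬜(x = y) ≃ (η x = η y)`. -/
structure LexMod : Type (u + 1) where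
  box : Type u → Type u
  map : ∀ {A B : Type u}, (A → B) → box A → box B
  unit : ∀ {A : Type u}, A → box A
  map_id : ∀ A : Type u, map (id : A → A) = id
  map_comp : ∀ {A B C : Type u} (f : A → B) (g : B → C), map (g ∘ f) = map g ∘ map f
  unit_natural : ∀ {A B : Type u} (f : A → B) (a : A), map f (unit a) = unit (f a)
  idem : ∀ A : Type u, Function.Bijective (unit (A := box A))
  sigma_equiv : ∀ (A : Type u) (B : box A → Type u),
    Nonempty (box (Σ x : A, B (unit x)) ≃ Σ v : box A, box (B v))
  lex_id : ∀ {A : Type u} (x y : A),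
    Nonempty (box (ULift.{u} (PLift (x = y))) ≃ PLift (unit x = unit y))

/-- For a left exact idempotent modality `⬜` with unit `η`, a type `A` and a point
`u₀ : ⬜A`, the reduced type over `u₀`, namely `A_{u₀} := Σ (y : A), (u₀ = η y)`, is
`⬜`-connected (its `⬜` is contractible); moreover `A ≃ Σ (u : ⬜A), A_u`. -/
theorem stmt18 (M : LexMod.{u}) (A : Type u) (u₀ : M.box A) :
    (Nonempty (M.box {y : A // u₀ = M.unit y}) ∧
      Subsingleton (M.box {y : A // u₀ = M.unit y})) ∧
    Nonempty (A ≃ Σ v : M.box A, {y : A // v = M.unit y}) := by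
  -- functoriality: an equivalence of types gives an equivalence of boxes
  have mapEquiv : ∀ {X Y : Type u}, (X ≃ Y) → (M.box X ≃ M.box Y) := by
    intro X Y e
    refine ⟨M.map e, M.map e.symm, ?_, ?_⟩
    · intro x
      have h1 : (M.map (e.symm ∘ e) : M.box X → M.box X)
          = M.map e.symm ∘ M.map e := M.map_comp _ _
      have h2 : ((e.symm ∘ e : X → X)) = id := funext fun a => e.symm_apply_apply a
      have := congrFun (h1.symm.trans (by rw [h2, M.map_id])) x
      simpa using this
    · intro y
      have h1 : (M.map (e ∘ e.symm) : M.box Y → M.box Y)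
          = M.map e ∘ M.map e.symm := M.map_comp _ _
      have h2 : ((e ∘ e.symm : Y → Y)) = id := funext fun a => e.apply_symm_apply a
      have := congrFun (h1.symm.trans (by rw [h2, M.map_id])) y
      simpa using this
  constructor
  · -- ⬜-connectedness of the reduced type
    set C : M.box A → Type u := fun v => ULift.{u} (PLift (u₀ = v)) with hC
    obtain ⟨σ⟩ := M.sigma_equiv A C
    have L : ∀ v : M.box A, M.box (C v) ≃ PLift (M.unit u₀ = M.unit v) :=
      fun v => (M.lex_id u₀ v).some
    have e1 : {y : A // u₀ = M.unit y} ≃ Σ y : A, C (M.unit y) :=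
      { toFun := fun p => ⟨p.1, ⟨⟨p.2⟩⟩⟩
        invFun := fun p => ⟨p.1, p.2.down.down⟩
        left_inv := fun p => rfl
        right_inv := fun p => rfl }
    have E : M.box {y : A // u₀ = M.unit y} ≃ Σ v : M.box A, PLift (M.unit u₀ = M.unit v) :=
      ((mapEquiv e1).trans σ).trans (Equiv.sigmaCongrRight L)
    have hne : Nonempty (Σ v : M.box A, PLift (M.unit u₀ = M.unit v)) := ⟨⟨u₀, ⟨rfl⟩⟩⟩
    have hss : Subsingleton (Σ v : M.box A, PLift (M.unit u₀ = M.unit v)) := by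
      constructor
      rintro ⟨v, ⟨h⟩⟩ ⟨v', ⟨h'⟩⟩
      have hv : u₀ = v := (M.idem A).1 h
      have hv' : u₀ = v' := (M.idem A).1 h'
      subst hv; subst hv'
      rfl
    refine ⟨⟨E.symm hne.some⟩, ?_⟩
    constructor
    intro a b
    have := hss.allEq (E a) (E b)
    exact E.injective this
  · -- A ≃ Σ v, A_v
    refine ⟨⟨fun a => ⟨M.unit a, a, rfl⟩, fun p => p.2.1, fun a => rfl, ?_⟩⟩
    rintro ⟨v, y, h⟩
    subst h
    rfl
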